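/- arXiv:2102.10835 — 4 statements merged into one kernel-verified Lean document; each statement's English description precedes it below -/
import Mathlib

section
/- Let τ_A, τ_B, τ_C, τ_D, u > 0 and set S = √((τ_A√u + τ_D/√u)(τ_C√u + τ_B/√u)). Then x* = (τ_B/√u)·√((τ_A√u + τ_D/√u)/(τ_C√u + τ_B/√u)), y* = (τ_D/√u)·√((τ_C√u + τ_B/√u)/(τ_A√u + τ_D/√u)), z* = (τ_A τ_C u − τ_B τ_D/u)/S satisfy the system x*(x*+z*) = τ_A τ_B, y*(y*+z*) = τ_C τ_D, (x*+z*)(y*+z*) = τ_A τ_C u. -/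
open Real

theorem aux_xz (τA τB τC τD s u p q : ℝ)
    (hs0 : 0 < s) (hu : 0 < u) (hp : 0 < p) (hq : 0 < q)
    (hs2 : s * s = u)
    (hp2 : p * p = τA * s + τD / s) (hq2 : q * q = τC * s + τB / s) :
    τB / s * (p / q) + (τA * τC * u - τB * τD / u) / (p * q) = τA * s * (q / p) := by
  have hs : s ≠ 0 := hs0.ne'
  have hun : u ≠ 0 := hu.ne'
  have hp2' : s * (p * p) = τA * u + τD := by
    rw [hp2]; field_simp; linear_combination τA * hs2
  have hq2' : s * (q * q) = τC * u + τB := by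
    rw [hq2]; field_simp; linear_combination τC * hs2
  field_simp
  apply mul_left_cancel₀ hs
  linear_combination u*τB*hp2' - τA*u*s*s*hq2' + (-(τB*τD) - τA*τB*u)*hs2

/-- The explicit formulas for `(x*, y*, z*)` solve the critical-point system. -/
theorem statement4 (τA τB τC τD u : ℝ)
    (hA : 0 < τA) (hB : 0 < τB) (hC : 0 < τC) (hD : 0 < τD) (hu : 0 < u) :
    let S := Real.sqrt ((τA * Real.sqrt u + τD / Real.sqrt u) * (τC * Real.sqrt u + τB / Real.sqrt u))
    let x := τB / Real.sqrt u *
      Real.sqrt ((τA * Real.sqrt u + τD / Real.sqrt u) / (τC * Real.sqrt u + τB / Real.sqrt u))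
    let y := τD / Real.sqrt u *
      Real.sqrt ((τC * Real.sqrt u + τB / Real.sqrt u) / (τA * Real.sqrt u + τD / Real.sqrt u))
    let z := (τA * τC * u - τB * τD / u) / S
    x * (x + z) = τA * τB ∧ y * (y + z) = τC * τD ∧ (x + z) * (y + z) = τA * τC * u := by
  intro S x y z
  have hs0 : 0 < Real.sqrt u := Real.sqrt_pos.mpr hu
  have hs2 : Real.sqrt u * Real.sqrt u = u := Real.mul_self_sqrt hu.le
  set s := Real.sqrt u with hs
  have ha0 : 0 < τA * s + τD / s := by positivity
  have hc0 : 0 < τC * s + τB / s := by positivity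
  set a := τA * s + τD / s with ha
  set c := τC * s + τB / s with hc
  have hsa : Real.sqrt a * Real.sqrt a = a := Real.mul_self_sqrt ha0.le
  have hsc : Real.sqrt c * Real.sqrt c = c := Real.mul_self_sqrt hc0.le
  have hSa : 0 < Real.sqrt a := Real.sqrt_pos.mpr ha0
  have hSc : 0 < Real.sqrt c := Real.sqrt_pos.mpr hc0
  have hS : S = Real.sqrt a * Real.sqrt c := Real.sqrt_mul ha0.le _
  have hx : x = τB / s * (Real.sqrt a / Real.sqrt c) := by
    show τB / s * Real.sqrt (a / c) = _
    rw [Real.sqrt_div ha0.le]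
  have hy : y = τD / s * (Real.sqrt c / Real.sqrt a) := by
    show τD / s * Real.sqrt (c / a) = _
    rw [Real.sqrt_div hc0.le]
  have hz : z = (τA * τC * u - τB * τD / u) / (Real.sqrt a * Real.sqrt c) := by
    show (τA * τC * u - τB * τD / u) / S = _
    rw [hS]
  have hxz : x + z = τA * s * (Real.sqrt c / Real.sqrt a) := by
    rw [hx, hz]
    exact aux_xz τA τB τC τD s u _ _ hs0 hu hSa hSc hs2 hsa hsc
  have hyz : y + z = τC * s * (Real.sqrt a / Real.sqrt c) := by
    rw [hy, hz]
    have := aux_xz τC τD τA τB s u _ _ hs0 hu hSc hSa hs2 hsc hsa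
    calc τD / s * (Real.sqrt c / Real.sqrt a) + (τA * τC * u - τB * τD / u) / (Real.sqrt a * Real.sqrt c)
        = τD / s * (Real.sqrt c / Real.sqrt a) + (τC * τA * u - τD * τB / u) / (Real.sqrt c * Real.sqrt a) := by ring_nf
      _ = τC * s * (Real.sqrt a / Real.sqrt c) := this
  have hu0 : u ≠ 0 := hu.ne'
  refine ⟨?_, ?_, ?_⟩
  · rw [hxz, hx]
    field_simp
  · rw [hyz, hy]
    field_simp
  · rw [hxz, hyz]
    field_simp
    linear_combination hs2
end

section
/- Let τ_A, τ_B, τ_C, τ_D, u > 0 and let (x*, y*, z*) satisfy x*(x*+z*) = τ_A τ_B, y*(y*+z*) = τ_C τ_D, (x*+z*)(y*+z*) = τ_A τ_C u, with x*, y*, x*+z*, y*+z* > 0. Then the value of φ_u at this point equals −2√((τ_A√u + τ_D/√u)(τ_C√u + τ_B/√u)), where φ_u(x,y,z) = x log x − x(1 + log τ_B) + (x+z) log(x+z) − (x+z)(1 + log τ_A) + y log y − y(1 + log τ_D) + (y+z) log(y+z) − (y+z)(1 + log τ_C) − z log u. -/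
open Real

/-- At the critical point, `φ_u` takes the value
`−2√((τ_A√u + τ_D/√u)(τ_C√u + τ_B/√u))`. -/
theorem statement6 (τA τB τC τD u : ℝ)
    (hA : 0 < τA) (hB : 0 < τB) (hC : 0 < τC) (hD : 0 < τD) (hu : 0 < u)
    (x y z : ℝ) (hx : 0 < x) (hy : 0 < y) (hxz : 0 < x + z) (hyz : 0 < y + z)
    (h1 : x * (x + z) = τA * τB) (h2 : y * (y + z) = τC * τD)
    (h3 : (x + z) * (y + z) = τA * τC * u) :
    x * log x - x * (1 + log τB)
      + (x + z) * log (x + z) - (x + z) * (1 + log τA)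
      + y * log y - y * (1 + log τD)
      + (y + z) * log (y + z) - (y + z) * (1 + log τC)
      - z * log u =
    -2 * Real.sqrt ((τA * Real.sqrt u + τD / Real.sqrt u) *
      (τC * Real.sqrt u + τB / Real.sqrt u)) := by
  have hs0 : 0 < Real.sqrt u := Real.sqrt_pos.mpr hu
  have hs2 : Real.sqrt u ^ 2 = u := Real.sq_sqrt hu.le
  -- τB * τD = x * y * u
  have hbd : τB * τD = x * y * u := by
    have h12 : x * y * ((x + z) * (y + z)) = τA * τC * (τB * τD) := by
      calc x * y * ((x + z) * (y + z)) = (x * (x + z)) * (y * (y + z)) := by ring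
        _ = τA * τB * (τC * τD) := by rw [h1, h2]
        _ = τA * τC * (τB * τD) := by ring
    rw [h3] at h12
    have hAC : (τA * τC) ≠ 0 := by positivity
    have h12' : τA * τC * (x * y * u) = τA * τC * (τB * τD) := by
      linear_combination h12
    exact (mul_left_cancel₀ hAC h12').symm
  have key2 : (τA * u + τD) * (τC * u + τB) = u * (x + y + z) ^ 2 := by
    linear_combination -u * h3 - u * h1 - u * h2 + hbd
  have key : (τA * Real.sqrt u + τD / Real.sqrt u) *
      (τC * Real.sqrt u + τB / Real.sqrt u) = (x + y + z) ^ 2 := by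
    have hss : Real.sqrt u * Real.sqrt u = u := Real.mul_self_sqrt hu.le
    field_simp
    rw [hs2]
    linear_combination key2
  have hxyz : 0 < x + y + z := by linarith
  have hrhs : Real.sqrt ((τA * Real.sqrt u + τD / Real.sqrt u) *
      (τC * Real.sqrt u + τB / Real.sqrt u)) = x + y + z := by
    rw [key, Real.sqrt_sq hxyz.le]
  have hlogx : Real.log x = log τA + log τB - log (x + z) := by
    have h := Real.log_mul hx.ne' hxz.ne'
    rw [h1, Real.log_mul hA.ne' hB.ne'] at h
    linarith
  have hlogy : Real.log y = log τC + log τD - log (y + z) := by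
    have h := Real.log_mul hy.ne' hyz.ne'
    rw [h2, Real.log_mul hC.ne' hD.ne'] at h
    linarith
  have hlogu : Real.log u = log (x + z) + log (y + z) - log τA - log τC := by
    have h := Real.log_mul hxz.ne' hyz.ne'
    rw [h3, Real.log_mul (by positivity : (τA * τC : ℝ) ≠ 0) hu.ne',
      Real.log_mul hA.ne' hC.ne'] at h
    linarith
  rw [hlogx, hlogy, hlogu, hrhs]
  ring
end

section
/- With φ_u as above (τ_A, τ_B, τ_C, τ_D, u > 0) and (x*, y*, z*) the critical point given by the explicit formulas, the determinant of the Hessian matrix of φ_u at (x*, y*, z*) equals (2/(τ_A τ_B τ_C τ_D))·√((τ_A√u + τ_D/√u)(τ_C√u + τ_B/√u)). -/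
open Real

/-- The determinant of the Hessian of `φ_u` at the critical point equals
`(2/(τ_A τ_B τ_C τ_D))·√((τ_A√u + τ_D/√u)(τ_C√u + τ_B/√u))`. -/
theorem statement7 (τA τB τC τD u : ℝ)
    (hA : 0 < τA) (hB : 0 < τB) (hC : 0 < τC) (hD : 0 < τD) (hu : 0 < u)
    (x y z : ℝ) (hx : 0 < x) (hy : 0 < y) (hxz : 0 < x + z) (hyz : 0 < y + z)
    (h1 : x * (x + z) = τA * τB) (h2 : y * (y + z) = τC * τD)
    (h3 : (x + z) * (y + z) = τA * τC * u) :
    (!![1 / x + 1 / (x + z), 0, 1 / (x + z);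
        0, 1 / y + 1 / (y + z), 1 / (y + z);
        1 / (x + z), 1 / (y + z), 1 / (x + z) + 1 / (y + z)] : Matrix (Fin 3) (Fin 3) ℝ).det =
      2 / (τA * τB * τC * τD) *
        Real.sqrt ((τA * Real.sqrt u + τD / Real.sqrt u) *
          (τC * Real.sqrt u + τB / Real.sqrt u)) := by
  set su := Real.sqrt u with hsu
  have hsu0 : 0 < su := Real.sqrt_pos.mpr hu
  have hsu2 : su ^ 2 = u := Real.sq_sqrt hu.le
  have hτB : τB = x * (x + z) / τA := by
    field_simp
    linarith [h1]
  have hτD : τD = y * (y + z) / τC := by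
    field_simp
    linarith [h2]
  have hu' : u = (x + z) * (y + z) / (τA * τC) := by
    field_simp
    linarith [h3]
  have key : (τA * su + τD / su) * (τC * su + τB / su) = (x + y + z) ^ 2 := by
    rw [hτB, hτD]
    have hAC : τA * τC * su ^ 2 = (x + z) * (y + z) := by
      rw [hsu2, hu']; field_simp
    field_simp
    linear_combination (τA * τC * su ^ 2 - x * y) * hAC
  rw [key, Real.sqrt_sq (by nlinarith)]
  have hprod : τA * τB * τC * τD = x * (x + z) * (y * (y + z)) := by
    linear_combination (-(τC * τD)) * h1 - x * (x + z) * h2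
  rw [hprod, Matrix.det_fin_three]
  simp only [Matrix.of_apply, Matrix.cons_val', Matrix.cons_val_zero, Matrix.cons_val_one, Matrix.cons_val_two, Matrix.empty_val', Matrix.cons_val_fin_one, Matrix.head_cons, Matrix.tail_cons, Matrix.vecHead, Matrix.vecTail, Function.comp_apply, Fin.succ_zero_eq_one, Fin.succ_one_eq_two]
  field_simp
  ring
end

section
/- Let α, γ, δ > 0 and u > 0. Define φ_u(x, y) = x log x − x(1 + log α) + (x+y) log(x+y) − (x+y)(1 + log γ) + y log y − y(1 + log δ) − x log u on the open set {x > 0, y > 0}. Then φ_u is strictly convex and its unique critical point is (x*, y*) with x* = αγu/√(αγu + γδ) and y* = γδ/√(αγu + γδ), and φ_u(x*, y*) = −2√(αγu + γδ). -/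
open Real

/-- Derivative of `φ` at a point with positive coordinates. -/
lemma phi_hasFDerivAt (α γ δ u : ℝ) (p : ℝ × ℝ) (hx : 0 < p.1) (hy : 0 < p.2) :
    HasFDerivAt (fun p : ℝ × ℝ =>
      p.1 * log p.1 - p.1 * (1 + log α)
      + (p.1 + p.2) * log (p.1 + p.2) - (p.1 + p.2) * (1 + log γ)
      + p.2 * log p.2 - p.2 * (1 + log δ)
      - p.1 * log u)
      ((log p.1 + log (p.1 + p.2) - log α - log γ - log u) • ContinuousLinearMap.fst ℝ ℝ ℝ
        + (log (p.1 + p.2) + log p.2 - log γ - log δ) • ContinuousLinearMap.snd ℝ ℝ ℝ) p := by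
  have hs : 0 < p.1 + p.2 := add_pos hx hy
  have h1 : HasFDerivAt (fun q : ℝ × ℝ => q.1 * log q.1)
      ((log p.1 + 1) • ContinuousLinearMap.fst ℝ ℝ ℝ) p :=
    (Real.hasDerivAt_mul_log hx.ne').comp_hasFDerivAt p (hasFDerivAt_fst)
  have h2 : HasFDerivAt (fun q : ℝ × ℝ => (q.1 + q.2) * log (q.1 + q.2))
      ((log (p.1 + p.2) + 1) • (ContinuousLinearMap.fst ℝ ℝ ℝ + ContinuousLinearMap.snd ℝ ℝ ℝ)) p :=
    (Real.hasDerivAt_mul_log hs.ne').comp_hasFDerivAt (h₂ := fun x => x * log x) p ((hasFDerivAt_fst (p := p) (𝕜 := ℝ)).fun_add (hasFDerivAt_snd (p := p) (𝕜 := ℝ)))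
  have h3 : HasFDerivAt (fun q : ℝ × ℝ => q.2 * log q.2)
      ((log p.2 + 1) • ContinuousLinearMap.snd ℝ ℝ ℝ) p :=
    (Real.hasDerivAt_mul_log hy.ne').comp_hasFDerivAt p (hasFDerivAt_snd)
  have h4 : HasFDerivAt (fun q : ℝ × ℝ => q.1 * (1 + log α))
      ((1 + log α) • ContinuousLinearMap.fst ℝ ℝ ℝ) p := by
    simpa using (hasFDerivAt_fst (p := p) (𝕜 := ℝ)).mul_const (1 + log α)
  have h5 : HasFDerivAt (fun q : ℝ × ℝ => (q.1 + q.2) * (1 + log γ))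
      ((1 + log γ) • (ContinuousLinearMap.fst ℝ ℝ ℝ + ContinuousLinearMap.snd ℝ ℝ ℝ)) p := by
    simpa using ((hasFDerivAt_fst (p := p) (𝕜 := ℝ)).add hasFDerivAt_snd).mul_const (1 + log γ)
  have h6 : HasFDerivAt (fun q : ℝ × ℝ => q.2 * (1 + log δ))
      ((1 + log δ) • ContinuousLinearMap.snd ℝ ℝ ℝ) p := by
    simpa using (hasFDerivAt_snd (p := p) (𝕜 := ℝ)).mul_const (1 + log δ)
  have h7 : HasFDerivAt (fun q : ℝ × ℝ => q.1 * log u)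
      ((log u) • ContinuousLinearMap.fst ℝ ℝ ℝ) p := by
    simpa using (hasFDerivAt_fst (p := p) (𝕜 := ℝ)).mul_const (log u)
  have H := (((((h1.sub h4).add h2).sub h5).add h3).sub h6).sub h7
  refine H.congr_fderiv ?_
  apply ContinuousLinearMap.ext
  intro v
  simp [ContinuousLinearMap.smul_apply, ContinuousLinearMap.add_apply]
  ring

set_option maxHeartbeats 1000000 in
/-- In the degenerate case `τ_B = 0`, the function `φ_u` on `{x > 0, y > 0}` is
strictly convex, its unique critical point is
`(x*, y*) = (αγu/√(αγu + γδ), γδ/√(αγu + γδ))`, and `φ_u(x*, y*) = −2√(αγu + γδ)`. -/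
theorem statement14 (α γ δ u : ℝ) (hα : 0 < α) (hγ : 0 < γ) (hδ : 0 < δ) (hu : 0 < u) :
    let φ : ℝ × ℝ → ℝ := fun p =>
      p.1 * log p.1 - p.1 * (1 + log α)
      + (p.1 + p.2) * log (p.1 + p.2) - (p.1 + p.2) * (1 + log γ)
      + p.2 * log p.2 - p.2 * (1 + log δ)
      - p.1 * log u
    let xstar := α * γ * u / Real.sqrt (α * γ * u + γ * δ)
    let ystar := γ * δ / Real.sqrt (α * γ * u + γ * δ)
    StrictConvexOn ℝ {p : ℝ × ℝ | 0 < p.1 ∧ 0 < p.2} φ ∧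
      (∀ p : ℝ × ℝ, 0 < p.1 → 0 < p.2 → (fderiv ℝ φ p = 0 ↔ p = (xstar, ystar))) ∧
      φ (xstar, ystar) = -2 * Real.sqrt (α * γ * u + γ * δ) := by
  intro φ xstar ystar
  have hS : 0 < α * γ * u + γ * δ := by positivity
  set s : ℝ := Real.sqrt (α * γ * u + γ * δ) with hs_def
  have hs : 0 < s := Real.sqrt_pos.mpr hS
  have hss : s * s = α * γ * u + γ * δ := Real.mul_self_sqrt hS.le
  have hxs : (0:ℝ) < xstar := by
    have : xstar = α * γ * u / s := rfl
    rw [this]; positivity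
  have hys : (0:ℝ) < ystar := by
    have : ystar = γ * δ / s := rfl
    rw [this]; positivity
  have hsum : xstar + ystar = s := by
    show α * γ * u / s + γ * δ / s = s
    field_simp
    linarith [hss]
  refine ⟨?_, ?_, ?_⟩
  · -- strict convexity
    constructor
    · exact (convex_Ioi (0:ℝ)).prod (convex_Ioi (0:ℝ))
    · intro p hp q hq hpq a b ha hb hab
      obtain ⟨hp1, hp2⟩ := hp
      obtain ⟨hq1, hq2⟩ := hq
      have keylt : ∀ x y : ℝ, 0 < x → 0 < y → x ≠ y →
          (a * x + b * y) * log (a * x + b * y) < a * (x * log x) + b * (y * log y) := by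
        intro x y hx hy hne
        have := Real.strictConvexOn_mul_log.2 (Set.mem_Ici.mpr hx.le) (Set.mem_Ici.mpr hy.le)
          hne ha hb hab
        simpa [smul_eq_mul] using this
      have keyle : ∀ x y : ℝ, 0 ≤ x → 0 ≤ y →
          (a * x + b * y) * log (a * x + b * y) ≤ a * (x * log x) + b * (y * log y) := by
        intro x y hx hy
        have := Real.convexOn_mul_log.2 (Set.mem_Ici.mpr hx) (Set.mem_Ici.mpr hy)
          ha.le hb.le hab
        simpa [smul_eq_mul] using this
      have hc : a • p + b • q = (a * p.1 + b * q.1, a * p.2 + b * q.2) := by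
        ext <;> simp
      rw [hc]
      show (a * p.1 + b * q.1) * log (a * p.1 + b * q.1)
          - (a * p.1 + b * q.1) * (1 + log α)
          + ((a * p.1 + b * q.1) + (a * p.2 + b * q.2)) *
            log ((a * p.1 + b * q.1) + (a * p.2 + b * q.2))
          - ((a * p.1 + b * q.1) + (a * p.2 + b * q.2)) * (1 + log γ)
          + (a * p.2 + b * q.2) * log (a * p.2 + b * q.2)
          - (a * p.2 + b * q.2) * (1 + log δ)
          - (a * p.1 + b * q.1) * log u < a • φ p + b • φ q
      have harg : (a * p.1 + b * q.1) + (a * p.2 + b * q.2)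
          = a * (p.1 + p.2) + b * (q.1 + q.2) := by ring
      rw [harg]
      simp only [smul_eq_mul, φ]
      rcases eq_or_ne p.1 q.1 with h1 | h1
      · have h2 : p.2 ≠ q.2 := by
          intro h2; exact hpq (Prod.ext h1 h2)
        have T3 := keylt p.2 q.2 hp2 hq2 h2
        have T1 := keyle p.1 q.1 hp1.le hq1.le
        have T2 := keyle (p.1 + p.2) (q.1 + q.2) (by linarith) (by linarith)
        nlinarith [T1, T2, T3]
      · have T1 := keylt p.1 q.1 hp1 hq1 h1
        have T3 := keyle p.2 q.2 hp2.le hq2.le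
        have T2 := keyle (p.1 + p.2) (q.1 + q.2) (by linarith) (by linarith)
        nlinarith [T1, T2, T3]
  · -- critical point
    intro p hx hy
    have hps : 0 < p.1 + p.2 := add_pos hx hy
    have H := phi_hasFDerivAt α γ δ u p hx hy
    have hD : fderiv ℝ φ p =
        (log p.1 + log (p.1 + p.2) - log α - log γ - log u) • ContinuousLinearMap.fst ℝ ℝ ℝ
          + (log (p.1 + p.2) + log p.2 - log γ - log δ) • ContinuousLinearMap.snd ℝ ℝ ℝ :=
      H.fderiv
    constructor
    · intro h0
      rw [hD] at h0
      have hA : log p.1 + log (p.1 + p.2) - log α - log γ - log u = 0 := by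
        have := DFunLike.congr_fun h0 ((1 : ℝ), (0 : ℝ))
        simpa using this
      have hB : log (p.1 + p.2) + log p.2 - log γ - log δ = 0 := by
        have := DFunLike.congr_fun h0 ((0 : ℝ), (1 : ℝ))
        simpa using this
      have e1 : p.1 * (p.1 + p.2) = α * γ * u := by
        have hl : log (p.1 * (p.1 + p.2)) = log (α * γ * u) := by
          rw [Real.log_mul hx.ne' hps.ne', Real.log_mul (by positivity) hu.ne',
            Real.log_mul hα.ne' hγ.ne']
          linarith
        have := congrArg Real.exp hl
        rwa [Real.exp_log (by positivity), Real.exp_log (by positivity)] at this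
      have e2 : p.2 * (p.1 + p.2) = γ * δ := by
        have hl : log (p.2 * (p.1 + p.2)) = log (γ * δ) := by
          rw [Real.log_mul hy.ne' hps.ne', Real.log_mul hγ.ne' hδ.ne']
          linarith
        have := congrArg Real.exp hl
        rwa [Real.exp_log (by positivity), Real.exp_log (by positivity)] at this
      have hssum : (p.1 + p.2) * (p.1 + p.2) = α * γ * u + γ * δ := by nlinarith
      have hseq : p.1 + p.2 = s := by
        rw [hs_def, ← hssum, Real.sqrt_mul_self hps.le]
      have hx1 : p.1 = xstar := by
        show p.1 = α * γ * u / s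
        rw [eq_div_iff hs.ne', ← hseq]
        linarith [e1]
      have hy1 : p.2 = ystar := by
        show p.2 = γ * δ / s
        rw [eq_div_iff hs.ne', ← hseq]
        linarith [e2]
      exact Prod.ext hx1 hy1
    · intro hp
      rw [hD, hp]
      have h1 : (xstar, ystar).1 = xstar := rfl
      have h2 : (xstar, ystar).2 = ystar := rfl
      have hsum' : (xstar, ystar).1 + (xstar, ystar).2 = s := hsum
      rw [h1, h2, hsum']
      have hlx : log xstar = log α + log γ + log u - log s := by
        show log (α * γ * u / s) = _
        rw [Real.log_div (by positivity) hs.ne', Real.log_mul (by positivity) hu.ne',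
          Real.log_mul hα.ne' hγ.ne']
      have hly : log ystar = log γ + log δ - log s := by
        show log (γ * δ / s) = _
        rw [Real.log_div (by positivity) hs.ne', Real.log_mul hγ.ne' hδ.ne']
      rw [hlx, hly]
      have c1 : log α + log γ + log u - log s + log s - log α - log γ - log u = 0 := by ring
      have c2 : log s + (log γ + log δ - log s) - log γ - log δ = 0 := by ring
      rw [c1, c2]
      simp
  · -- value
    show xstar * log xstar - xstar * (1 + log α)
        + (xstar + ystar) * log (xstar + ystar) - (xstar + ystar) * (1 + log γ)
        + ystar * log ystar - ystar * (1 + log δ)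
        - xstar * log u = -2 * s
    have hlx : log xstar = log α + log γ + log u - log s := by
      show log (α * γ * u / s) = _
      rw [Real.log_div (by positivity) hs.ne', Real.log_mul (by positivity) hu.ne',
        Real.log_mul hα.ne' hγ.ne']
    have hly : log ystar = log γ + log δ - log s := by
      show log (γ * δ / s) = _
      rw [Real.log_div (by positivity) hs.ne', Real.log_mul hγ.ne' hδ.ne']
    rw [hsum, hlx, hly]
    linear_combination (log γ - log s - 1) * hsum
end
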